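/- arXiv:1209.4497 — 4 statements merged into one kernel-verified Lean document; each statement's English description precedes it below -/
import Mathlib

section
/- With the setup of the model space H(Γ) for T ∈ S_n(H), the multiplication operator M_Γ f̂ := z·f̂ with domain {f̂ ∈ H(Γ) : z f̂ ∈ H(Γ)} satisfies U D(T) = D(M_Γ) and U T = M_Γ U, where (Uf)(z) = Γ(z)*f. Hence T is unitarily equivalent to M_Γ. -/
/-!
For `z` non-real, `Ker Γ(z)* = Rng(T - z)`; applying `Γ(z)*` to `T f - z f` gives the intertwining
relation. Conversely, if `z Γ(z)* f = Γ(z)* g` for all non-real `z`, write `g - i f = (T - i) h` with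
`h ∈ D(T)`. Then `(w - i) Γ(w)* (f - h) = 0`, so `Γ(w)*` kills `u := f - h` for every non-real
`w ≠ i`. At `w = i` itself, the estimate `‖(T - w) v‖ ≥ |Im w| ‖v‖` for symmetric `T` puts `u` in the
closure of `Rng(T - i) = Ker Γ(i)*`, which is closed. Simplicity then forces `u = 0`, i.e. `f = h`.
-/

open scoped InnerProductSpace LinearPMap

namespace LinearPMap

variable {H : Type*} [NormedAddCommGroup H] [InnerProductSpace ℂ H] (T : H →ₗ.[ℂ] H)

def rangeSubSmul (z : ℂ) : Set H := {x | ∃ g : T.domain, T g - z • (g : H) = x}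

variable {T}

theorem abs_im_mul_norm_le_norm_sub_smul
    (hsym : ∀ x y : T.domain, ⟪T x, (y : H)⟫_ℂ = ⟪(x : H), T y⟫_ℂ) (v : T.domain) (w : ℂ) :
    |w.im| * ‖(v : H)‖ ≤ ‖T v - w • (v : H)‖ := by
  have hre : (⟪(v : H), T v⟫_ℂ).im = 0 :=
    Complex.conj_eq_iff_im.mp (by rw [inner_conj_symm]; exact hsym v v)
  have him : (⟪(v : H), T v - w • (v : H)⟫_ℂ).im = -(w.im * ‖(v : H)‖ ^ 2) := by
    rw [inner_sub_right, inner_smul_right, inner_self_eq_norm_sq_to_K]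
    simp [Complex.mul_im, hre, ← Complex.ofReal_pow]
  have hsq : ‖(v : H)‖ * (|w.im| * ‖(v : H)‖) ≤ ‖(v : H)‖ * ‖T v - w • (v : H)‖ :=
    calc ‖(v : H)‖ * (|w.im| * ‖(v : H)‖)
        = |(⟪(v : H), T v - w • (v : H)⟫_ℂ).im| := by
          rw [him, abs_neg, abs_mul, abs_of_nonneg (sq_nonneg ‖(v : H)‖)]; ring
      _ ≤ ‖⟪(v : H), T v - w • (v : H)⟫_ℂ‖ := Complex.abs_im_le_norm _
      _ ≤ ‖(v : H)‖ * ‖T v - w • (v : H)‖ := norm_inner_le_norm _ _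
  rcases (norm_nonneg (v : H)).eq_or_lt with hv | hv
  · rw [← hv, mul_zero]; exact norm_nonneg _
  · exact le_of_mul_le_mul_left hsq hv

/-- Solving `(T - (z + ε)) q = u` and using `‖q‖ ≤ ‖u‖ / |Im z|`, the vector
`(T - z) q = u + ε q` is within `ε ‖u‖ / |Im z|` of `u`. -/
theorem mem_closure_rangeSubSmul
    (hsym : ∀ x y : T.domain, ⟪T x, (y : H)⟫_ℂ = ⟪(x : H), T y⟫_ℂ) {z : ℂ} (hz : z.im ≠ 0)
    {u : H} (hu : ∀ ε : ℝ, 0 < ε → u ∈ T.rangeSubSmul (z + ε)) :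
    u ∈ _root_.closure (T.rangeSubSmul z) := by
  rw [Metric.mem_closure_iff]
  intro δ hδ
  have hzpos : 0 < |z.im| := abs_pos.mpr hz
  set ε : ℝ := δ * |z.im| / (‖u‖ + 1) with hε
  have hεpos : 0 < ε := by positivity
  obtain ⟨q, hq⟩ := hu ε hεpos
  have hq_le : |z.im| * ‖(q : H)‖ ≤ ‖u‖ := by
    simpa [hq] using abs_im_mul_norm_le_norm_sub_smul hsym q (z + ε)
  refine ⟨T q - z • (q : H), ⟨q, rfl⟩, ?_⟩
  have hdiff : u - (T q - z • (q : H)) = -((ε : ℂ) • (q : H)) := by rw [← hq]; module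
  rw [dist_eq_norm, hdiff, norm_neg, norm_smul, Complex.norm_real, Real.norm_eq_abs,
    abs_of_pos hεpos]
  calc ε * ‖(q : H)‖ = δ * (|z.im| * ‖(q : H)‖) / (‖u‖ + 1) := by rw [hε]; ring
    _ ≤ δ * ‖u‖ / (‖u‖ + 1) := by gcongr
    _ < δ := by rw [div_lt_iff₀ (by positivity)]; nlinarith

end LinearPMap

section ModelSpace

open ContinuousLinearMap

variable {H K : Type*} [NormedAddCommGroup H] [InnerProductSpace ℂ H] [CompleteSpace H]
  [NormedAddCommGroup K] [InnerProductSpace ℂ K] [CompleteSpace K]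
  {T : H →ₗ.[ℂ] H} {Γ : ℂ → (K →L[ℂ] H)} {z : ℂ}

theorem isClosed_rangeSubSmul
    (hker : ∀ f : H, adjoint (Γ z) f = 0 ↔ ∃ g : T.domain, T g - z • (g : H) = f) :
    IsClosed (T.rangeSubSmul z) := by
  have : T.rangeSubSmul z = {f | adjoint (Γ z) f = 0} := by
    ext f; exact (hker f).symm
  rw [this]
  exact isClosed_eq (adjoint (Γ z)).continuous continuous_const

theorem adjoint_apply_map_eq_smul
    (hker : ∀ f : H, adjoint (Γ z) f = 0 ↔ ∃ g : T.domain, T g - z • (g : H) = f)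
    (f : T.domain) : adjoint (Γ z) (T f) = z • adjoint (Γ z) (f : H) := by
  have h0 := (hker _).mpr ⟨f, rfl⟩
  rwa [map_sub, map_smul, sub_eq_zero] at h0

theorem adjoint_apply_sub_eq_zero {w : ℂ} {f g : H} {h : T.domain}
    (hkerw : ∀ f : H, adjoint (Γ w) f = 0 ↔ ∃ g : T.domain, T g - w • (g : H) = f)
    (hwz : w ≠ z) (hg : w • adjoint (Γ w) f = adjoint (Γ w) g)
    (hh : T h - z • (h : H) = g - z • f) :
    adjoint (Γ w) (f - h) = 0 := by
  have e := congrArg (adjoint (Γ w)) hh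
  rw [map_sub, map_sub, map_smul, map_smul, adjoint_apply_map_eq_smul hkerw h, ← hg] at e
  have e' : (w - z) • adjoint (Γ w) (f - h) = 0 := by
    rw [map_sub]; linear_combination (norm := module) -e
  exact (smul_eq_zero.mp e').resolve_left (sub_ne_zero.mpr hwz)

end ModelSpace

theorem stmt_7_general {H K : Type*}
    [NormedAddCommGroup H] [InnerProductSpace ℂ H] [CompleteSpace H]
    [NormedAddCommGroup K] [InnerProductSpace ℂ K] [CompleteSpace K]
    (T : H →ₗ.[ℂ] H)
    (hsym : ∀ x y : T.domain, ⟪T x, (y : H)⟫_ℂ = ⟪(x : H), T y⟫_ℂ)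
    (Γ : ℂ → (K →L[ℂ] H))
    (hker : ∀ z : ℂ, z.im ≠ 0 → ∀ f : H,
      (ContinuousLinearMap.adjoint (Γ z) f = 0 ↔ ∃ g : T.domain, T g - z • (g : H) = f))
    (hsimple : ∀ f : H,
      (∀ z : ℂ, z.im ≠ 0 → ContinuousLinearMap.adjoint (Γ z) f = 0) → f = 0) :
    (∀ f : T.domain, ∀ z : ℂ, z.im ≠ 0 →
        ContinuousLinearMap.adjoint (Γ z) (T f)
          = z • ContinuousLinearMap.adjoint (Γ z) (f : H)) ∧
      ∀ f : H,
        (∃ g : H, ∀ z : ℂ, z.im ≠ 0 →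
            z • ContinuousLinearMap.adjoint (Γ z) f
              = ContinuousLinearMap.adjoint (Γ z) g) →
          f ∈ T.domain := by
  refine ⟨fun f z hz => adjoint_apply_map_eq_smul (hker z hz) f, ?_⟩
  rintro f ⟨g, hg⟩
  have hI : Complex.I.im ≠ 0 := by simp
  obtain ⟨h, hh⟩ := (hker _ hI (g - Complex.I • f)).mp (by rw [map_sub, map_smul, ← hg _ hI, sub_self])
  have hoff : ∀ w : ℂ, w.im ≠ 0 → w ≠ Complex.I →
      ContinuousLinearMap.adjoint (Γ w) (f - h) = 0 :=
    fun w hw hwI => adjoint_apply_sub_eq_zero (hker w hw) hwI (hg w hw) hh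
  have hat : ContinuousLinearMap.adjoint (Γ Complex.I) (f - h) = 0 := by
    have hmem := T.mem_closure_rangeSubSmul hsym hI fun ε hε =>
      (hker _ (by simp) _).mp (hoff _ (by simp) (by simpa using hε.ne'))
    rw [(isClosed_rangeSubSmul (hker _ hI)).closure_eq] at hmem
    exact (hker _ hI _).mpr hmem
  have hfh : f = h := sub_eq_zero.mp <| hsimple _ fun w hw => by
    rcases eq_or_ne w Complex.I with rfl | hwI
    exacts [hat, hoff w hw hwI]
  exact hfh ▸ h.2

/-- With `U f = Γ(·)* f` the unitary onto the model space `H(Γ)` of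
`T`, the operator `M_Γ f̂ = z f̂` with domain `{f̂ : z f̂ ∈ H(Γ)}` satisfies
`U D(T) = D(M_Γ)` and `U T = M_Γ U`: i.e. (i) for `f ∈ D(T)`,
`Γ(z)*(T f) = z·Γ(z)* f` for all non-real `z` (so `U f ∈ D(M_Γ)` and
`M_Γ U f = U T f`), and (ii) if `z·Γ(z)* f = Γ(z)* g` for some `g ∈ H` and all
non-real `z`, then `f ∈ D(T)`. Hence `T` is unitarily equivalent to `M_Γ`. -/
theorem stmt_7 {H K : Type*}
    [NormedAddCommGroup H] [InnerProductSpace ℂ H] [CompleteSpace H]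
    [NormedAddCommGroup K] [InnerProductSpace ℂ K] [CompleteSpace K]
    (T : H →ₗ.[ℂ] H) (hdense : Dense (T.domain : Set H))
    (hsym : ∀ x y : T.domain, ⟪T x, (y : H)⟫_ℂ = ⟪(x : H), T y⟫_ℂ)
    (hclosed : IsClosed (T.graph : Set (H × H)))
    (Γ : ℂ → (K →L[ℂ] H))
    (hker : ∀ z : ℂ, z.im ≠ 0 → ∀ f : H,
      (ContinuousLinearMap.adjoint (Γ z) f = 0 ↔ ∃ g : T.domain, T g - z • (g : H) = f))
    (hsimple : ∀ f : H,
      (∀ z : ℂ, z.im ≠ 0 → ContinuousLinearMap.adjoint (Γ z) f = 0) → f = 0) :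
    (∀ f : T.domain, ∀ z : ℂ, z.im ≠ 0 →
        ContinuousLinearMap.adjoint (Γ z) (T f)
          = z • ContinuousLinearMap.adjoint (Γ z) (f : H)) ∧
      ∀ f : H,
        (∃ g : H, ∀ z : ℂ, z.im ≠ 0 →
            z • ContinuousLinearMap.adjoint (Γ z) f
              = ContinuousLinearMap.adjoint (Γ z) g) →
          f ∈ T.domain :=
  stmt_7_general T hsym Γ hker hsimple
end

section
/- Define on the model space H(Γ) the operators L := (1/b)(I − P_i) and R := b(I − P_{−i}), where b(z) = (z−i)/(z+i) and P_{±i} are the orthogonal projections onto the orthogonal complements of {f ∈ H(Γ) : f(±i) = 0}. Then L and R are bounded and L* = R. -/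
open scoped InnerProductSpace

section SelfAdjointKernel

variable {𝕜 E : Type*} [RCLike 𝕜] [NormedAddCommGroup E] [InnerProductSpace 𝕜 E]
  [CompleteSpace E] {P : E →L[𝕜] E}

lemma inner_sub_map_right_of_map_eq_zero (hP : ContinuousLinearMap.adjoint P = P)
    {x : E} (hx : P x = 0) (y : E) : ⟪x, y - P y⟫_𝕜 = ⟪x, y⟫_𝕜 := by
  rw [inner_sub_right, ← ContinuousLinearMap.adjoint_inner_left, hP, hx, inner_zero_left,
    sub_zero]

lemma inner_sub_map_left_of_map_eq_zero (hP : ContinuousLinearMap.adjoint P = P)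
    (x : E) {y : E} (hy : P y = 0) : ⟪x - P x, y⟫_𝕜 = ⟪x, y⟫_𝕜 := by
  rw [inner_sub_left, ← ContinuousLinearMap.adjoint_inner_right, hP, hy, inner_zero_right,
    sub_zero]

end SelfAdjointKernel

theorem stmt_8_general {E : Type*} [NormedAddCommGroup E] [InnerProductSpace ℂ E]
    [CompleteSpace E]
    (Pp Pm L R C : E →L[ℂ] E)
    (hPp_sa : ContinuousLinearMap.adjoint Pp = Pp)
    (hPm_sa : ContinuousLinearMap.adjoint Pm = Pm)
    (hC_isom : ∀ x y : E, ⟪C (x - Pm x), C (y - Pm y)⟫_ℂ = ⟪x - Pm x, y - Pm y⟫_ℂ)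
    (hL1 : ∀ f : E, C (L f) = f - Pp f)
    (hL2 : ∀ f : E, Pm (L f) = 0)
    (hR : ∀ g : E, R g = C (g - Pm g))
    (hRfin : ∀ g : E, Pp (R g) = 0) :
    ContinuousLinearMap.adjoint L = R ∧ ∀ f g : E, ⟪L f, g⟫_ℂ = ⟪f, R g⟫_ℂ := by
  have hL : ∀ f g : E, ⟪L f, g⟫_ℂ = ⟪f, R g⟫_ℂ := fun f g => by
    have hLf : L f - Pm (L f) = L f := by rw [hL2, sub_zero]
    calc ⟪L f, g⟫_ℂ
        = ⟪L f - Pm (L f), g - Pm g⟫_ℂ := by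
          rw [hLf, inner_sub_map_right_of_map_eq_zero hPm_sa (hL2 f)]
      _ = ⟪C (L f - Pm (L f)), C (g - Pm g)⟫_ℂ := (hC_isom _ _).symm
      _ = ⟪f - Pp f, R g⟫_ℂ := by rw [hLf, hL1, hR]
      _ = ⟪f, R g⟫_ℂ := inner_sub_map_left_of_map_eq_zero hPp_sa f (hRfin g)
  have hL_eq : L = ContinuousLinearMap.adjoint R :=
    (ContinuousLinearMap.eq_adjoint_iff L R).2 hL
  exact ⟨by rw [hL_eq, ContinuousLinearMap.adjoint_adjoint], hL⟩

/-- On the model space `H(Γ)` (an abstract complex Hilbert space `E`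
here), let `P₊, P₋` be the orthogonal projections onto `{f : f(i)=0}ᗮ`, `{f : f(−i)=0}ᗮ`
respectively, and let `C` be the Cayley transform (multiplication by `b`), which is
isometric on `Rng(I−P₋)`.  The operators `L = (1/b)(I−P₊)` and `R = b(I−P₋)` (bounded,
by the closed graph theorem), characterized by `C(Lf) = f − P₊f`, `P₋(Lf) = 0`,
`Rg = C(g − P₋g)`, `P₊(Rg) = 0`, satisfy `L* = R`:  `⟨Lf, g⟩ = ⟨f, Rg⟩` for all `f, g`. -/
theorem stmt_8 {E : Type*} [NormedAddCommGroup E] [InnerProductSpace ℂ E]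
    [CompleteSpace E]
    (Pp Pm L R C : E →L[ℂ] E)
    (hPp_proj : Pp ∘L Pp = Pp) (hPp_sa : ContinuousLinearMap.adjoint Pp = Pp)
    (hPm_proj : Pm ∘L Pm = Pm) (hPm_sa : ContinuousLinearMap.adjoint Pm = Pm)
    (hC_isom : ∀ x y : E, ⟪C (x - Pm x), C (y - Pm y)⟫_ℂ = ⟪x - Pm x, y - Pm y⟫_ℂ)
    (hL1 : ∀ f : E, C (L f) = f - Pp f)
    (hL2 : ∀ f : E, Pm (L f) = 0)
    (hR : ∀ g : E, R g = C (g - Pm g))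
    (hRfin : ∀ g : E, Pp (R g) = 0) :
    ContinuousLinearMap.adjoint L = R ∧ ∀ f g : E, ⟪L f, g⟫_ℂ = ⟪f, R g⟫_ℂ :=
  stmt_8_general Pp Pm L R C hPp_sa hPm_sa hC_isom hL1 hL2 hR hRfin
end

section
/- Let K_λ(z) be the kernel of the model space of T ∈ S_n(H), with Φ(z) = K_i(z)K_i(i)^{−1/2}, Ψ(z) = K_{−i}(z)K_{−i}(−i)^{−1/2}, and V(z) = b(z)Φ(z)^{−1}Ψ(z) where b(z) = (z−i)/(z+i). Then for each z in the upper half-plane, V(z) : K → K is a strict contraction: ‖V(z)‖ < 1. -/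
/-!
Passing to adjoints, `‖V‖ = ‖(b̄ Ψ*) ∘ (Φ⁻¹)*‖`, and `(Φ⁻¹)*` is a right inverse of `Φ*`.
Since `|b| < 1` on the upper half-plane, the lower bound on `K_z(z)` unfolds to
`‖Φ* a‖² ≥ ‖b̄ Ψ* a‖² + δ ‖a‖²` with `δ = ε (1 - |b|²) > 0`. Putting `a = (Φ⁻¹)* x`, so that
`‖x‖ ≤ ‖Φ*‖ ‖a‖`, gives `‖V* x‖² ≤ ‖Φ*‖² / (‖Φ*‖² + δ) · ‖x‖²`.
-/

open scoped InnerProductSpace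

namespace Complex

theorem norm_sub_I_div_add_I_lt_one {z : ℂ} (hz : 0 < z.im) : ‖(z - I) / (z + I)‖ < 1 := by
  have hzI : 0 < ‖z + I‖ := norm_pos_iff.mpr fun h => by
    have := congrArg im h
    simp only [add_im, I_im, zero_im] at this
    linarith
  rw [norm_div, div_lt_one hzI, ← sq_lt_sq₀ (norm_nonneg _) hzI.le, Complex.sq_norm,
    Complex.sq_norm]
  simp only [normSq_apply, sub_re, sub_im, add_re, add_im, I_re, I_im]
  nlinarith

end Complex

namespace ContinuousLinearMap

section

variable {𝕜 E F G : Type*} [RCLike 𝕜] [NormedAddCommGroup E] [NormedSpace 𝕜 E]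
  [NormedAddCommGroup F] [NormedSpace 𝕜 F] [NormedAddCommGroup G] [NormedSpace 𝕜 G]

theorem norm_lt_one_of_sq_le {T : E →L[𝕜] F} {c : ℝ} (hc : c < 1)
    (h : ∀ x, ‖T x‖ ^ 2 ≤ c * ‖x‖ ^ 2) : ‖T‖ < 1 := by
  refine (opNorm_le_bound T (Real.sqrt_nonneg c) fun x => ?_).trans_lt ?_
  · rw [← Real.sqrt_sq (norm_nonneg (T x)), ← Real.sqrt_sq (norm_nonneg x),
      ← Real.sqrt_mul' c (sq_nonneg _)]
    exact Real.sqrt_le_sqrt (h x)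
  · rwa [Real.sqrt_lt' one_pos, one_pow]

theorem norm_comp_rightInverse_lt_one {L : E →L[𝕜] F} {R : E →L[𝕜] G} {Linv : F →L[𝕜] E}
    (hinv : L ∘L Linv = 1) {δ : ℝ} (hδ : 0 < δ)
    (h : ∀ a, ‖R a‖ ^ 2 + δ * ‖a‖ ^ 2 ≤ ‖L a‖ ^ 2) : ‖R ∘L Linv‖ < 1 := by
  set C := ‖L‖ ^ 2 + δ
  have hC : 0 < C := by positivity
  refine norm_lt_one_of_sq_le (c := ‖L‖ ^ 2 / C) ((div_lt_one hC).mpr (by simp [C, hδ]))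
    fun x => ?_
  set a := Linv x
  have hLa : L a = x := by simp [a, ← comp_apply, hinv]
  have hxa : ‖x‖ ^ 2 ≤ C * ‖a‖ ^ 2 := by
    rw [← hLa]
    nlinarith [pow_le_pow_left₀ (norm_nonneg _) (L.le_opNorm a) 2, sq_nonneg ‖a‖]
  have hRa := h a
  rw [hLa] at hRa
  rw [comp_apply, div_mul_eq_mul_div, le_div_iff₀ hC]
  nlinarith

end

section

variable {𝕜 E F : Type*} [RCLike 𝕜] [NormedAddCommGroup E] [InnerProductSpace 𝕜 E]
  [CompleteSpace E] [NormedAddCommGroup F] [InnerProductSpace 𝕜 F] [CompleteSpace F]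

theorem re_inner_comp_adjoint_apply (A : F →L[𝕜] E) (a : E) :
    RCLike.re ⟪(A ∘L adjoint A) a, a⟫_𝕜 = ‖adjoint A a‖ ^ 2 := by
  simpa using (apply_norm_sq_eq_inner_adjoint_left (adjoint A) a).symm

end

section

variable {E F G : Type*} [NormedAddCommGroup E] [InnerProductSpace ℂ E] [CompleteSpace E]
  [NormedAddCommGroup F] [InnerProductSpace ℂ F] [CompleteSpace F]
  [NormedAddCommGroup G] [InnerProductSpace ℂ G] [CompleteSpace G]

theorem add_le_sq_norm_adjoint_of_bounded_below {Φ : F →L[ℂ] E} {Ψ : G →L[ℂ] E}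
    {Kop : E →L[ℂ] E} {β ε : ℝ} (hβ : β < 1)
    (hbound : ∀ a, ε * ‖a‖ ^ 2 ≤ (⟪Kop a, a⟫_ℂ).re)
    (hker : Kop = (1 - β)⁻¹ • (Φ ∘L adjoint Φ - β • (Ψ ∘L adjoint Ψ))) (a : E) :
    β * ‖adjoint Ψ a‖ ^ 2 + ε * (1 - β) * ‖a‖ ^ 2 ≤ ‖adjoint Φ a‖ ^ 2 := by
  have hK : (⟪Kop a, a⟫_ℂ).re = (1 - β)⁻¹ * (‖adjoint Φ a‖ ^ 2 - β * ‖adjoint Ψ a‖ ^ 2) := by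
    rw [← RCLike.re_eq_complex_re]
    simp only [hker, smul_apply, sub_apply, RCLike.real_smul_eq_coe_smul (K := ℂ),
      inner_smul_left, inner_sub_left, RCLike.conj_ofReal, map_sub, RCLike.re_ofReal_mul,
      re_inner_comp_adjoint_apply]
  have ha := hbound a
  rw [hK, inv_mul_eq_div, le_div_iff₀ (sub_pos.mpr hβ)] at ha
  linarith

end

end ContinuousLinearMap

open ContinuousLinearMap in
theorem stmt_11_general {K : Type*} [NormedAddCommGroup K] [InnerProductSpace ℂ K]
    [CompleteSpace K]
    (z : ℂ) (hz : 0 < z.im)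
    (Kzz Φz Ψz Φzinv : K →L[ℂ] K)
    (hΦinv₂ : Φzinv ∘L Φz = 1)
    (ε : ℝ) (hε : 0 < ε)
    (hbound : ∀ a : K, ε * ‖a‖ ^ 2 ≤ (⟪Kzz a, a⟫_ℂ).re)
    (hker : Kzz = (1 - ‖(z - Complex.I) / (z + Complex.I)‖ ^ 2)⁻¹ •
        (Φz ∘L adjoint Φz
          - ‖(z - Complex.I) / (z + Complex.I)‖ ^ 2 • (Ψz ∘L adjoint Ψz))) :
    ‖((z - Complex.I) / (z + Complex.I)) • (Φzinv ∘L Ψz)‖ < 1 := by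
  have hβ : ‖(z - Complex.I) / (z + Complex.I)‖ ^ 2 < 1 :=
    pow_lt_one₀ (norm_nonneg _) (Complex.norm_sub_I_div_add_I_lt_one hz) two_ne_zero
  have key := add_le_sq_norm_adjoint_of_bounded_below hβ hbound hker
  have hinv : adjoint Φz ∘L adjoint Φzinv = 1 := by
    rw [← adjoint_comp, hΦinv₂, one_def, adjoint_id]
  rw [← LinearIsometryEquiv.norm_map adjoint, LinearIsometryEquiv.map_smulₛₗ, adjoint_comp,
    ← smul_comp]
  refine norm_comp_rightInverse_lt_one hinv (mul_pos hε (sub_pos.mpr hβ)) fun a => ?_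
  rw [smul_apply, norm_smul, RCLike.norm_conj, mul_pow]
  exact key a

open ContinuousLinearMap in
/-- Fix `z` in the upper half-plane, let `b(z) = (z−i)/(z+i)`, and let
`K_z(z), Φ(z), Ψ(z)` be the operators on `K` arising from the model-space kernel, so that
(i) `⟨K_z(z)a, a⟩ ≥ ε‖a‖²` for some `ε > 0` (the kernel is bounded below), and
(ii) `K_z(z) = (Φ(z)Φ(z)* − |b(z)|²Ψ(z)Ψ(z)*)/(1 − |b(z)|²)`.
Then `V(z) = b(z)Φ(z)^{−1}Ψ(z)` is a strict contraction: `‖V(z)‖ < 1`. -/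
theorem stmt_11 {K : Type*} [NormedAddCommGroup K] [InnerProductSpace ℂ K]
    [CompleteSpace K]
    (z : ℂ) (hz : 0 < z.im)
    (Kzz Φz Ψz Φzinv : K →L[ℂ] K)
    (hΦinv₁ : Φz ∘L Φzinv = 1) (hΦinv₂ : Φzinv ∘L Φz = 1)
    (ε : ℝ) (hε : 0 < ε)
    (hbound : ∀ a : K, ε * ‖a‖ ^ 2 ≤ (⟪Kzz a, a⟫_ℂ).re)
    (hker : Kzz = (1 - ‖(z - Complex.I) / (z + Complex.I)‖ ^ 2)⁻¹ •
        (Φz ∘L adjoint Φz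
          - ‖(z - Complex.I) / (z + Complex.I)‖ ^ 2 • (Ψz ∘L adjoint Ψz))) :
    ‖((z - Complex.I) / (z + Complex.I)) • (Φzinv ∘L Ψz)‖ < 1 :=
  stmt_11_general z hz Kzz Φz Ψz Φzinv hΦinv₂ ε hε hbound hker
end

section
/- With V(z) = b(z)Φ(z)^{−1}Ψ(z) as above (the Livsic characteristic function of T, up to unitaries), one has V(z) V(z̄)* = I for all non-real z at which V(z) and V(z̄) are defined and invertible. -/
open scoped InnerProductSpace

/-- The Blaschke factor `b(z) = (z−i)/(z+i)` of the upper half-plane. -/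
noncomputable def blaschke (z : ℂ) : ℂ := (z - Complex.I) / (z + Complex.I)

/-!
At a non-real `z` with `b(z) ≠ 0`, take `λ = z̄` in the factorization. Since
`conj (b z̄) = b(z)⁻¹`, the denominator `1 − b(z)⁻¹ b(w)` vanishes only at `w = z`, so
`(1 − b(z)⁻¹ b(w)) • K_{z̄}(w) = Φ(w)(I − V(w)V(z̄)*)Φ(z̄)*` on a punctured neighbourhood
of `z`. Letting `w → z`, the left side tends to `0` because `K_{z̄}` is continuous, and
cancelling the invertible factors gives `V(z)V(z̄)* = I`.

At the zeros `±i` of `b` (where `b(-i) = 0` is a junk value of division) the denominator is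
identically `1`, so these two points are reached by continuity of `w ↦ V(w)V(w̄)*`.
-/

open Complex ComplexConjugate ContinuousLinearMap Filter Topology Set

lemma conj_blaschke_conj (z : ℂ) : conj (blaschke (conj z)) = (blaschke z)⁻¹ := by
  simp only [blaschke, map_div₀, map_sub, map_add, conj_conj, conj_I, sub_neg_eq_add, inv_div,
    ← sub_eq_add_neg]

lemma blaschke_eq_zero_iff {z : ℂ} : blaschke z = 0 ↔ z = I ∨ z = -I := by
  simp only [blaschke, div_eq_zero_iff, sub_eq_zero, add_eq_zero_iff_eq_neg]

lemma blaschke_injOn : InjOn blaschke {-I}ᶜ := by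
  intro z hz w hw h
  have hz : z + I ≠ 0 := fun h => hz (eq_neg_of_add_eq_zero_left h)
  have hw : w + I ≠ 0 := fun h => hw (eq_neg_of_add_eq_zero_left h)
  rw [blaschke, blaschke, div_eq_div_iff hz hw] at h
  have : 2 * I * (z - w) = 0 := by linear_combination h
  simpa [I_ne_zero, sub_eq_zero] using this

lemma continuousAt_blaschke {z : ℂ} (hz : z ≠ -I) : ContinuousAt blaschke z :=
  (continuousAt_id.sub continuousAt_const).div (continuousAt_id.add continuousAt_const)
    fun h => hz (eq_neg_of_add_eq_zero_left h)

lemma blaschke_inv_mul_blaschke_ne_one {z w : ℂ} (hbz : blaschke z ≠ 0) (hwz : w ≠ z) :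
    (blaschke z)⁻¹ * blaschke w ≠ 1 := by
  intro h
  have hbw : blaschke z = blaschke w := (inv_mul_eq_one₀ hbz).1 h
  have hz : z ≠ -I := fun h => hbz (blaschke_eq_zero_iff.2 (Or.inr h))
  have hw : w ≠ -I := fun h => hbz (hbw.trans (blaschke_eq_zero_iff.2 (Or.inr h)))
  exact hwz (blaschke_injOn hw hz hbw.symm)

lemma eq_zero_of_eventuallyEq_smul {X 𝕜 E : Type*} [TopologicalSpace X] [TopologicalSpace 𝕜]
    [Zero 𝕜] [TopologicalSpace E] [T2Space E] [AddCommMonoid E] [SMulWithZero 𝕜 E]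
    [ContinuousSMul 𝕜 E] {F G : X → E} {c : X → 𝕜} {z : X} [(𝓝[≠] z).NeBot]
    (hF : ContinuousAt F z) (hG : ContinuousAt G z) (hc : ContinuousAt c z) (hcz : c z = 0)
    (h : F =ᶠ[𝓝[≠] z] fun w => c w • G w) : F z = 0 := by
  rw [((hF.eventuallyEq_nhds_iff_eventuallyEq_nhdsNE (hc.smul hG)).1 h).eq_of_nhds,
    Pi.smul_apply', hcz, zero_smul]

lemma comp_adjoint_conj_eq_one_of_factorization {K : Type*} [NormedAddCommGroup K]
    [InnerProductSpace ℂ K] [CompleteSpace K] {Kmap : ℂ → ℂ → (K →L[ℂ] K)}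
    {Φ V : ℂ → (K →L[ℂ] K)}
    (hfact : ∀ lam z : ℂ, lam.im ≠ 0 → z.im ≠ 0 →
      (starRingEnd ℂ) (blaschke lam) * blaschke z ≠ 1 →
      Kmap lam z = Φ z ∘L
        (((1 : ℂ) - (starRingEnd ℂ) (blaschke lam) * blaschke z)⁻¹ •
          (1 - V z ∘L adjoint (V lam))) ∘L adjoint (Φ lam))
    {z : ℂ} (hz : z.im ≠ 0) (hbz : blaschke z ≠ 0) (hK : ContinuousAt (Kmap (conj z)) z)
    (hV : ContinuousAt V z) (hΦ : ContinuousAt Φ z) (hΦz : IsUnit (Φ z))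
    (hΦz' : IsUnit (Φ (conj z))) :
    V z ∘L adjoint (V (conj z)) = 1 := by
  have hz' : (conj z).im ≠ 0 := by rwa [conj_im, neg_ne_zero]
  have hnear : ∀ᶠ w in 𝓝[≠] z, w.im ≠ 0 :=
    eventually_nhdsWithin_of_eventually_nhds
      ((isOpen_ne_fun continuous_im continuous_const).mem_nhds hz)
  have hnum : Φ z ∘L (1 - V z ∘L adjoint (V (conj z))) ∘L adjoint (Φ (conj z)) = 0 := by
    refine eq_zero_of_eventuallyEq_smul
      (F := fun w => Φ w ∘L (1 - V w ∘L adjoint (V (conj z))) ∘L adjoint (Φ (conj z)))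
      (c := fun w => 1 - (blaschke z)⁻¹ * blaschke w) (by fun_prop) hK
      (continuousAt_const.sub (continuousAt_const.mul
        (continuousAt_blaschke fun h => hbz (blaschke_eq_zero_iff.2 (Or.inr h)))))
      (by simp [inv_mul_cancel₀ hbz]) ?_
    filter_upwards [hnear, self_mem_nhdsWithin] with w hw hwz
    have hc := blaschke_inv_mul_blaschke_ne_one hbz hwz
    rw [← conj_blaschke_conj] at hc ⊢
    rw [hfact _ w hz' hw hc, smul_comp, comp_smul, smul_smul,
      mul_inv_cancel₀ (sub_ne_zero.2 hc.symm), one_smul]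
  have hΦz'adj : IsUnit (adjoint (Φ (conj z))) := by
    simpa only [star_eq_adjoint] using hΦz'.star
  rw [← mul_def, ← mul_def, hΦz.mul_right_eq_zero, hΦz'adj.mul_left_eq_zero,
    sub_eq_zero] at hnum
  exact hnum.symm

open ContinuousLinearMap in
/-- Suppose the (continuous) operator-valued functions `Kmap`, `Φ`, `V`
on `ℂ∖ℝ` satisfy the factorization
`K_λ(z) = Φ(z)·[(I − V(z)V(λ)*)/(1 − conj(b(λ))b(z))]·Φ(λ)*` whenever
`conj(b(λ))b(z) ≠ 1`, with each `Φ(z)` invertible.  Then (since the kernel stays bounded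
as `z → λ̄` while the denominator vanishes) `V(z)V(z̄)* = I` for all non-real `z`. -/
theorem stmt_13 {K : Type*} [NormedAddCommGroup K] [InnerProductSpace ℂ K]
    [CompleteSpace K]
    (Kmap : ℂ → ℂ → (K →L[ℂ] K)) (Φ Φinv V : ℂ → (K →L[ℂ] K))
    (hΦ : ∀ z : ℂ, z.im ≠ 0 → Φ z ∘L Φinv z = 1 ∧ Φinv z ∘L Φ z = 1)
    (hfact : ∀ lam z : ℂ, lam.im ≠ 0 → z.im ≠ 0 →
      (starRingEnd ℂ) (blaschke lam) * blaschke z ≠ 1 →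
      Kmap lam z = Φ z ∘L
        (((1 : ℂ) - (starRingEnd ℂ) (blaschke lam) * blaschke z)⁻¹ •
          (1 - V z ∘L adjoint (V lam))) ∘L adjoint (Φ lam))
    (hKcont : ∀ lam : ℂ, lam.im ≠ 0 → ContinuousOn (Kmap lam) {w : ℂ | w.im ≠ 0})
    (hVcont : ContinuousOn V {w : ℂ | w.im ≠ 0})
    (hΦcont : ContinuousOn Φ {w : ℂ | w.im ≠ 0}) :
    ∀ z : ℂ, z.im ≠ 0 → V z ∘L adjoint (V ((starRingEnd ℂ) z)) = 1 := by
  set s : Set ℂ := {w : ℂ | w.im ≠ 0}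
  have hs : IsOpen s := isOpen_ne_fun continuous_im continuous_const
  have hconj : MapsTo conj s s := fun w hw => by simpa [s] using hw
  have hunit : ∀ z ∈ s, IsUnit (Φ z) := fun z hz =>
    ⟨⟨Φ z, Φinv z, (hΦ z hz).1, (hΦ z hz).2⟩, rfl⟩
  have hgeneric : EqOn (fun z => V z ∘L adjoint (V (conj z))) 1 (s \ {I, -I}) := by
    rintro z ⟨hz, hzI⟩
    have hbz : blaschke z ≠ 0 := fun h => hzI (blaschke_eq_zero_iff.1 h)
    exact comp_adjoint_conj_eq_one_of_factorization hfact hz hbz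
      ((hKcont _ (hconj hz)).continuousAt (hs.mem_nhds hz))
      (hVcont.continuousAt (hs.mem_nhds hz)) (hΦcont.continuousAt (hs.mem_nhds hz))
      (hunit z hz) (hunit _ (hconj hz))
  have hcont : ContinuousOn (fun z => V z ∘L adjoint (V (conj z))) s :=
    hVcont.clm_comp ((adjoint (𝕜 := ℂ) (E := K) (F := K)).continuous.comp_continuousOn
      (hVcont.comp continuous_conj.continuousOn hconj))
  have hdense : s ⊆ closure (s \ {I, -I}) :=
    ((toFinite {I, -I}).countable.dense_compl ℂ).open_subset_closure_inter hs
  exact hgeneric.of_subset_closure hcont continuousOn_const sdiff_subset hdense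
end
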